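/- arXiv:2007.05815 — 6 statements merged into one kernel-verified Lean document; each statement's English description precedes it below -/
import Mathlib

section
/- Let f:[0,1]→[0,1] be a convex, strictly increasing, continuously differentiable function with f(1)=1 and f not the identity, let α∈(0,1), and let p₁,p₂∈[0,1] with p₁+p₂≤1 and p₂>0. Then the equation α(1−f(1−s)) = s(1−(1−α)p₁) − (1−α)p₂ has a unique solution s in the interval [0,1], and this solution lies in (0,1]. -/
/-!
Let `g(s)` be the left-hand side minus the right-hand side of the equation. As `f` is convex, `g`
is concave on `[0, 1]`, with `g 0 = (1 - α) p₂ > 0` and `g 1 = (1 - α) (p₁ + p₂ - 1) - α f 0 ≤ 0`.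
The intermediate value theorem gives a root. There is no second one: if `g x = g y = 0` with
`x < y`, then `x` lies strictly between `0` and `y`, so concavity puts `g x` above the chord from
`(0, g 0)` to `(y, 0)`, which is positive there.
-/

open Set

theorem ConcaveOn.subsingleton_zeros_of_pos_left {g : ℝ → ℝ} {a b : ℝ}
    (hg : ConcaveOn ℝ (Icc a b) g) (ha : 0 < g a) : {x ∈ Icc a b | g x = 0}.Subsingleton := by
  have no_two_zeros : ∀ x ∈ Icc a b, ∀ y ∈ Icc a b, g x = 0 → g y = 0 → ¬x < y := by
    intro x hx y hy hx0 hy0 hxy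
    have hax : a < x := hx.1.lt_of_ne (by rintro rfl; exact ha.ne' hx0)
    have hseg : x ∈ openSegment ℝ a y := by
      rw [openSegment_eq_Ioo (hax.trans hxy)]; exact ⟨hax, hxy⟩
    have := hg.left_le_of_le_right (left_mem_Icc.2 (hx.1.trans hx.2)) hy hseg
      (hx0.trans hy0.symm).le
    linarith
  rintro x ⟨hx, hx0⟩ y ⟨hy, hy0⟩
  rcases lt_trichotomy x y with hxy | hxy | hxy
  · exact (no_two_zeros x hx y hy hx0 hy0 hxy).elim
  · exact hxy
  · exact (no_two_zeros y hy x hx hy0 hx0 hxy).elim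

theorem ConcaveOn.existsUnique_zero_Icc {g : ℝ → ℝ} {a b : ℝ} (hab : a ≤ b)
    (hcont : ContinuousOn g (Icc a b)) (hg : ConcaveOn ℝ (Icc a b) g) (ha : 0 < g a)
    (hb : g b ≤ 0) : ∃! x, x ∈ Icc a b ∧ g x = 0 := by
  obtain ⟨x, hx, hx0⟩ := intermediate_value_Icc' hab hcont ⟨hb, ha.le⟩
  exact ⟨x, ⟨hx, hx0⟩, fun y hy => hg.subsingleton_zeros_of_pos_left ha hy ⟨hx, hx0⟩⟩

theorem ConvexOn.comp_one_sub {f : ℝ → ℝ} (hf : ConvexOn ℝ (Icc 0 1) f) :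
    ConvexOn ℝ (Icc 0 1) (fun s => f (1 - s)) := by
  refine ⟨convex_Icc 0 1, fun x hx y hy a b ha hb hab => ?_⟩
  have hcomb : 1 - (a • x + b • y) = a • (1 - x) + b • (1 - y) := by
    simp only [smul_eq_mul]; linear_combination -hab
  simpa only [hcomb] using
    hf.2 (Icc.mem_iff_one_sub_mem.1 hx) (Icc.mem_iff_one_sub_mem.1 hy) ha hb hab

def catalyticDefect (f : ℝ → ℝ) (α p₁ p₂ s : ℝ) : ℝ :=
  α * (1 - f (1 - s)) - (s * (1 - (1 - α) * p₁) - (1 - α) * p₂)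

section catalyticDefect

variable {f : ℝ → ℝ} {α p₁ p₂ : ℝ}

theorem catalyticDefect_eq_zero_iff {s : ℝ} : catalyticDefect f α p₁ p₂ s = 0 ↔
    α * (1 - f (1 - s)) = s * (1 - (1 - α) * p₁) - (1 - α) * p₂ :=
  sub_eq_zero

theorem catalyticDefect_zero (hf1 : f 1 = 1) : catalyticDefect f α p₁ p₂ 0 = (1 - α) * p₂ := by
  simp [catalyticDefect, hf1]

theorem catalyticDefect_one_nonpos (hf0 : 0 ≤ f 0) (hα : α ∈ Icc (0 : ℝ) 1)
    (hsum : p₁ + p₂ ≤ 1) : catalyticDefect f α p₁ p₂ 1 ≤ 0 := by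
  have := mul_le_mul_of_nonneg_left hsum (sub_nonneg.2 hα.2)
  have := mul_nonneg hα.1 hf0
  simp only [catalyticDefect, sub_self]
  linarith

theorem ConvexOn.concaveOn_catalyticDefect (hconv : ConvexOn ℝ (Icc 0 1) f) (hα : 0 ≤ α) :
    ConcaveOn ℝ (Icc 0 1) (catalyticDefect f α p₁ p₂) := by
  have h := (((hconv.comp_one_sub.neg.add_const 1).smul hα).sub
    ((LinearMap.mulLeft ℝ (1 - (1 - α) * p₁)).convexOn (convex_Icc 0 1))).add_const ((1 - α) * p₂)
  refine h.congr fun s _ => ?_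
  simp only [catalyticDefect, Pi.add_apply, Pi.sub_apply, Pi.neg_apply,
    LinearMap.mulLeft_apply, smul_eq_mul]
  ring

theorem ContinuousOn.catalyticDefect (hf : ContinuousOn f (Icc 0 1)) :
    ContinuousOn (catalyticDefect f α p₁ p₂) (Icc 0 1) := by
  have : MapsTo (1 - ·) (Icc (0 : ℝ) 1) (Icc 0 1) := fun _ hs => Icc.mem_iff_one_sub_mem.1 hs
  unfold _root_.catalyticDefect
  fun_prop (disch := assumption)

end catalyticDefect

theorem stmt_0_general (f : ℝ → ℝ) (α p₁ p₂ : ℝ)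
    (hconv : ConvexOn ℝ (Icc 0 1) f)
    (hdiff : ContDiffOn ℝ 1 f (Icc 0 1))
    (hmaps : MapsTo f (Icc 0 1) (Icc 0 1))
    (hf1 : f 1 = 1)
    (hα : α ∈ Ioo (0:ℝ) 1)
    (hsum : p₁ + p₂ ≤ 1) (hp₂pos : 0 < p₂) :
    (∃! s : ℝ, s ∈ Icc (0:ℝ) 1 ∧
        α * (1 - f (1 - s)) = s * (1 - (1 - α) * p₁) - (1 - α) * p₂) ∧
    (∀ s ∈ Icc (0:ℝ) 1,
        α * (1 - f (1 - s)) = s * (1 - (1 - α) * p₁) - (1 - α) * p₂ →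
        s ∈ Ioc (0:ℝ) 1) := by
  simp only [← catalyticDefect_eq_zero_iff]
  have hpos : 0 < catalyticDefect f α p₁ p₂ 0 := by
    rw [catalyticDefect_zero hf1]
    exact mul_pos (sub_pos.2 hα.2) hp₂pos
  have hf0 : 0 ≤ f 0 := (hmaps (left_mem_Icc.2 zero_le_one)).1
  have hone : catalyticDefect f α p₁ p₂ 1 ≤ 0 :=
    catalyticDefect_one_nonpos hf0 (Ioo_subset_Icc_self hα) hsum
  refine ⟨(hconv.concaveOn_catalyticDefect hα.1.le).existsUnique_zero_Icc zero_le_one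
    hdiff.continuousOn.catalyticDefect hpos hone, fun s hs hs0 => ⟨hs.1.lt_of_ne ?_, hs.2⟩⟩
  rintro rfl
  exact hpos.ne' hs0

/-- unique fixed point of the catalytic branching equation. -/
theorem stmt_0 (f : ℝ → ℝ) (α p₁ p₂ : ℝ)
    (hconv : ConvexOn ℝ (Icc 0 1) f)
    (hmono : StrictMonoOn f (Icc 0 1))
    (hdiff : ContDiffOn ℝ 1 f (Icc 0 1))
    (hmaps : MapsTo f (Icc 0 1) (Icc 0 1))
    (hf1 : f 1 = 1)
    (hne : ∃ t ∈ Icc (0:ℝ) 1, f t ≠ t)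
    (hα : α ∈ Ioo (0:ℝ) 1)
    (hp₁ : p₁ ∈ Icc (0:ℝ) 1) (hp₂ : p₂ ∈ Icc (0:ℝ) 1)
    (hsum : p₁ + p₂ ≤ 1) (hp₂pos : 0 < p₂) :
    (∃! s : ℝ, s ∈ Icc (0:ℝ) 1 ∧
        α * (1 - f (1 - s)) = s * (1 - (1 - α) * p₁) - (1 - α) * p₂) ∧
    (∀ s ∈ Icc (0:ℝ) 1,
        α * (1 - f (1 - s)) = s * (1 - (1 - α) * p₁) - (1 - α) * p₂ →
        s ∈ Ioc (0:ℝ) 1) :=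
  stmt_0_general f α p₁ p₂ hconv hdiff hmaps hf1 hα hsum hp₂pos
end

section
/- Let f:[0,1]→[0,1] be convex and differentiable with f(1)=1, f'(1)=m, and suppose α∈(0,1), p₁,p₂∈[0,1], p₁+p₂≤1. If s∈[0,1] satisfies s = α(1−f(1−s)) + (1−α)p₁ s + (1−α)p₂ and αm + (1−α)p₁ < 1, then s ≤ (1−α)p₂ / (1 − αm − (1−α)p₁). -/
open Set

/-- upper bound on a solution of the fixed-point equation. -/
theorem stmt_1 (f : ℝ → ℝ) (α m p₁ p₂ s : ℝ)
    (hconv : ConvexOn ℝ (Icc 0 1) f)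
    (hdiff : DifferentiableOn ℝ f (Icc 0 1))
    (hmaps : MapsTo f (Icc 0 1) (Icc 0 1))
    (hf1 : f 1 = 1)
    (hderiv : derivWithin f (Icc 0 1) 1 = m)
    (hα : α ∈ Ioo (0:ℝ) 1)
    (hp₁ : p₁ ∈ Icc (0:ℝ) 1) (hp₂ : p₂ ∈ Icc (0:ℝ) 1) (hsum : p₁ + p₂ ≤ 1)
    (hs : s ∈ Icc (0:ℝ) 1)
    (heq : s = α * (1 - f (1 - s)) + (1 - α) * p₁ * s + (1 - α) * p₂)
    (hsub : α * m + (1 - α) * p₁ < 1) :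
    s ≤ (1 - α) * p₂ / (1 - α * m - (1 - α) * p₁) := by
  have hden : 0 < 1 - α * m - (1 - α) * p₁ := by linarith
  rcases eq_or_lt_of_le hs.1 with h0 | h0
  · rw [← h0]
    exact div_nonneg (mul_nonneg (by linarith [hα.2]) hp₂.1) hden.le
  · have hx : (1 - s : ℝ) ∈ Icc (0:ℝ) 1 := ⟨by linarith [hs.2], by linarith⟩
    have hy : (1:ℝ) ∈ Icc (0:ℝ) 1 := by norm_num
    have hslope := hconv.slope_le_derivWithin hx hy (by linarith) (hdiff 1 hy)
    rw [hderiv, slope_def_field] at hslope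
    have h1 : (f 1 - f (1 - s)) / (1 - (1 - s)) ≤ m := hslope
    rw [hf1, show (1 : ℝ) - (1 - s) = s by ring, div_le_iff₀ h0] at h1
    have hkey : 1 - f (1 - s) ≤ m * s := by linarith
    have hαpos := hα.1
    have hs' : s * (1 - α * m - (1 - α) * p₁) ≤ (1 - α) * p₂ := by nlinarith
    rw [le_div_iff₀ hden]
    linarith
end

section
/- For a simple asymmetric random walk on ℤ (up-probability p, down-probability q=1−p, p≠q) started at 0, the probability that the maximum of the walk up to the first return time to 0 exceeds a positive integer x equals (q−p)/((q/p)^{x+1} − 1), and the probability of returning to 0 with maximum at most x equals p·((q/p)^{x+1} − (q/p))/((q/p)^{x+1} − 1) + min{p,q}. -/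
open Filter Topology Finset
open scoped Classical

/-- Position after `k` steps of a nearest-neighbor walk on ℤ started at `start`,
driven by the step sequence `s` (`true` = step `+1`, `false` = step `-1`). -/
def walkPos {n : ℕ} (start : ℤ) (s : Fin n → Bool) (k : ℕ) : ℤ :=
  start + ∑ i ∈ Finset.univ.filter (fun i : Fin n => (i : ℕ) < k),
    (if s i then (1 : ℤ) else -1)

/-- Probability weight of a finite step sequence when each step is `+1` with
probability `p` and `-1` with probability `1 - p`, independently. -/
noncomputable def stepWeight (p : ℝ) {n : ℕ} (s : Fin n → Bool) : ℝ :=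
  ∏ i, (if s i then p else 1 - p)

/-- Probability that the walk started at 0 exceeds level `x` (i.e. hits `x+1`)
within the first `n` steps, strictly before its first return to 0. -/
noncomputable def excursionExceedProb (p : ℝ) (x n : ℕ) : ℝ :=
  ∑ s : Fin n → Bool,
    if (∃ k ≤ n, 0 < k ∧ walkPos 0 s k = (x : ℤ) + 1 ∧
          ∀ j, 0 < j → j < k → walkPos 0 s j ≠ 0) then
      stepWeight p s else 0

/-- Probability that the walk started at 0 makes its first return to 0 within
the first `n` steps, with maximal position at most `x` up to that return. -/
noncomputable def excursionReturnBelowProb (p : ℝ) (x n : ℕ) : ℝ :=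
  ∑ s : Fin n → Bool,
    if (∃ k ≤ n, 0 < k ∧ walkPos 0 s k = 0 ∧
          (∀ j, 0 < j → j < k → walkPos 0 s j ≠ 0) ∧
          (∀ j ≤ k, walkPos 0 s j ≤ (x : ℤ))) then
      stepWeight p s else 0

/-! Condition on the first step. After a step up, the walk must reach `x + 1` before `0`
(resp. `0` before `x + 1`): a gambler's ruin problem on `[0, x + 1]`. Hitting probabilities are
harmonic inside the interval, so their increments grow geometrically with ratio `q / p`. After a
step down, the walk must climb from `-1` back to `0`; the probability `min 1 (p / q)` of this is
squeezed between gambler's ruin probabilities on `[-(m + 1), 0]` as `m → ∞`. -/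

lemma walkPos_zero (z : ℤ) {n : ℕ} (s : Fin n → Bool) : walkPos z s 0 = z := by
  simp [walkPos]

lemma walkPos_cons_succ (z : ℤ) {n : ℕ} (b : Bool) (s : Fin n → Bool) (k : ℕ) :
    walkPos z (Fin.cons b s) (k + 1) = walkPos (z + if b then 1 else -1) s k := by
  simp only [walkPos, Finset.sum_filter, Fin.sum_univ_succ, Fin.cons_zero, Fin.cons_succ,
    Fin.val_zero, Fin.val_succ, Nat.succ_pos, if_true, Nat.succ_lt_succ_iff]
  ring

lemma walkPos_init (z : ℤ) {n : ℕ} (s : Fin (n + 1) → Bool) {k : ℕ} (hk : k ≤ n) :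
    walkPos z (Fin.init s) k = walkPos z s k := by
  rw [walkPos, walkPos, Finset.sum_filter, Finset.sum_filter, Fin.sum_univ_castSucc,
    if_neg (by simp; omega), add_zero]
  rfl

lemma abs_walkPos_succ_sub_le (z : ℤ) {n : ℕ} (s : Fin n → Bool) (k : ℕ) :
    |walkPos z s (k + 1) - walkPos z s k| ≤ 1 := by
  induction n generalizing z k with
  | zero => simp [walkPos]
  | succ n ih =>
    rw [← Fin.cons_self_tail s]
    cases k with
    | zero => cases s 0 <;> simp [walkPos_cons_succ, walkPos_zero]
    | succ k => simpa only [walkPos_cons_succ] using ih _ _ k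

lemma sub_le_walkPos (z : ℤ) {n : ℕ} (s : Fin n → Bool) (k : ℕ) : z - k ≤ walkPos z s k := by
  induction k with
  | zero => simp [walkPos_zero]
  | succ k ih =>
    have := abs_le.1 (abs_walkPos_succ_sub_le z s k)
    push_cast
    linarith

lemma walkPos_lt_of_forall_ne {z c : ℤ} {n : ℕ} {s : Fin n → Bool} (hz : z ≤ c) {k : ℕ}
    (hne : ∀ i < k, walkPos z s i ≠ c) {j : ℕ} (hj : j < k) : walkPos z s j < c := by
  induction j with
  | zero => exact lt_of_le_of_ne (by rwa [walkPos_zero]) (hne 0 hj)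
  | succ j ih =>
    have := abs_le.1 (abs_walkPos_succ_sub_le z s j)
    have := ih (by omega)
    have := hne (j + 1) hj
    omega

lemma stepWeight_nonneg {p : ℝ} (hp0 : 0 ≤ p) (hp1 : p ≤ 1) {n : ℕ} (s : Fin n → Bool) :
    0 ≤ stepWeight p s :=
  Finset.prod_nonneg fun i _ => by split_ifs <;> linarith

lemma sum_stepWeight (p : ℝ) (n : ℕ) : ∑ s : Fin n → Bool, stepWeight p s = 1 := by
  simp [stepWeight, ← Fintype.prod_sum fun (_ : Fin n) (b : Bool) => if b then p else 1 - p]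

lemma stepWeight_cons (p : ℝ) {n : ℕ} (b : Bool) (s : Fin n → Bool) :
    stepWeight p (Fin.cons b s) = (if b then p else 1 - p) * stepWeight p s := by
  simp [stepWeight, Fin.prod_univ_succ]

lemma stepWeight_snoc (p : ℝ) {n : ℕ} (s : Fin n → Bool) (b : Bool) :
    stepWeight p (Fin.snoc s b) = stepWeight p s * (if b then p else 1 - p) := by
  simp [stepWeight, Fin.prod_univ_castSucc]

noncomputable def eventProb (p : ℝ) {n : ℕ} (E : (Fin n → Bool) → Prop) : ℝ :=
  ∑ s, if E s then stepWeight p s else 0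

section eventProb

variable {p : ℝ} {n : ℕ}

lemma eventProb_mono (hp0 : 0 ≤ p) (hp1 : p ≤ 1) {E F : (Fin n → Bool) → Prop}
    (h : ∀ s, E s → F s) : eventProb p E ≤ eventProb p F :=
  Finset.sum_le_sum fun s _ => by
    by_cases hE : E s
    · simp [hE, h s hE]
    · simp only [hE, if_false]
      split_ifs
      exacts [stepWeight_nonneg hp0 hp1 s, le_rfl]

lemma eventProb_le_one (hp0 : 0 ≤ p) (hp1 : p ≤ 1) (E : (Fin n → Bool) → Prop) :
    eventProb p E ≤ 1 := by
  calc eventProb p E ≤ eventProb p fun _ => True := eventProb_mono hp0 hp1 fun _ _ => trivial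
    _ = 1 := by simp [eventProb, sum_stepWeight]

lemma eventProb_of_forall (E : (Fin n → Bool) → Prop) (h : ∀ s, E s) : eventProb p E = 1 := by
  simp [eventProb, h, sum_stepWeight]

lemma eventProb_of_forall_not (E : (Fin n → Bool) → Prop) (h : ∀ s, ¬ E s) :
    eventProb p E = 0 := by
  simp [eventProb, h]

lemma eventProb_congr {E F : (Fin n → Bool) → Prop} (h : ∀ s, E s ↔ F s) :
    eventProb p E = eventProb p F := by
  rw [funext fun s => propext (h s)]

lemma eventProb_cons (E : (Fin (n + 1) → Bool) → Prop) :
    eventProb p E = p * eventProb p (fun s => E (Fin.cons true s))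
      + (1 - p) * eventProb p (fun s => E (Fin.cons false s)) := by
  rw [eventProb, ← (Fin.consEquiv fun _ => Bool).sum_comp, Fintype.sum_prod_type,
    Fintype.sum_bool]
  simp [Fin.consEquiv, eventProb, stepWeight_cons, Finset.mul_sum]

lemma eventProb_init (E : (Fin n → Bool) → Prop) :
    eventProb p (fun s : Fin (n + 1) → Bool => E (Fin.init s)) = eventProb p E := by
  rw [eventProb, ← (Fin.snocEquiv fun _ => Bool).sum_comp, Fintype.sum_prod_type,
    Finset.sum_comm, eventProb]
  refine Finset.sum_congr rfl fun s _ => ?_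
  simp only [Fin.snocEquiv, Equiv.coe_fn_mk, Fin.init_snoc, stepWeight_snoc, Fintype.sum_bool]
  by_cases hE : E s <;> simp [hE, ← mul_add]

end eventProb

def HitsBefore (z t : ℤ) (A : Set ℤ) {n : ℕ} (s : Fin n → Bool) : Prop :=
  ∃ k ≤ n, walkPos z s k = t ∧ ∀ j < k, walkPos z s j ∉ A

section HitsBefore

variable {z t : ℤ} {A : Set ℤ} {n : ℕ} {s : Fin n → Bool}

lemma hitsBefore_self (s : Fin n → Bool) : HitsBefore t t A s :=
  ⟨0, n.zero_le, walkPos_zero t s, fun j hj => absurd hj j.not_lt_zero⟩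

lemma not_hitsBefore_of_mem (hzA : z ∈ A) (hzt : z ≠ t) : ¬ HitsBefore z t A s := by
  rintro ⟨_ | k, -, hk, hbefore⟩
  · exact hzt (by simpa [walkPos_zero] using hk)
  · exact hbefore 0 k.succ_pos (by simpa [walkPos_zero] using hzA)

lemma HitsBefore.mono {B : Set ℤ} (hAB : A ⊆ B) (h : HitsBefore z t B s) : HitsBefore z t A s :=
  let ⟨k, hk, hkt, hbefore⟩ := h
  ⟨k, hk, hkt, fun j hj hjA => hbefore j hj (hAB hjA)⟩

lemma HitsBefore.insert_target (h : HitsBefore z t A s) : HitsBefore z t (insert t A) s := by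
  have hex : ∃ k, k ≤ n ∧ walkPos z s k = t ∧ ∀ j < k, walkPos z s j ∉ A := h
  have hfind := Nat.find_spec hex
  refine ⟨Nat.find hex, hfind.1, hfind.2.1, fun j hj hjA => ?_⟩
  rcases hjA with hjt | hjA
  · exact Nat.find_min hex hj ⟨by omega, hjt, fun i hi => hfind.2.2 i (by omega)⟩
  · exact hfind.2.2 j hj hjA

lemma HitsBefore.of_init {s : Fin (n + 1) → Bool} (h : HitsBefore z t A (Fin.init s)) :
    HitsBefore z t A s := by
  obtain ⟨k, hk, hkt, hbefore⟩ := h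
  refine ⟨k, by omega, by rwa [← walkPos_init z s hk], fun j hj => ?_⟩
  rw [← walkPos_init z s (by omega)]
  exact hbefore j hj

lemma hitsBefore_cons_iff (hzt : z ≠ t) (hzA : z ∉ A) (b : Bool) :
    HitsBefore z t A (Fin.cons b s) ↔ HitsBefore (z + if b then 1 else -1) t A s := by
  constructor
  · rintro ⟨_ | k, hk, hkt, hbefore⟩
    · exact absurd (by simpa [walkPos_zero] using hkt) hzt
    · refine ⟨k, by omega, by rwa [← walkPos_cons_succ], fun j hj => ?_⟩
      rw [← walkPos_cons_succ]
      exact hbefore (j + 1) (by omega)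
  · rintro ⟨k, hk, hkt, hbefore⟩
    refine ⟨k + 1, by omega, by rwa [walkPos_cons_succ], fun j hj => ?_⟩
    cases j with
    | zero => simpa [walkPos_zero] using hzA
    | succ j => simpa [walkPos_cons_succ] using hbefore j (by omega)

end HitsBefore

noncomputable def hitProbWithin (p : ℝ) (n : ℕ) (z t : ℤ) (A : Set ℤ) : ℝ :=
  eventProb p (HitsBefore z t A (n := n))

noncomputable def hitProb (p : ℝ) (z t : ℤ) (A : Set ℤ) : ℝ :=
  ⨆ n, hitProbWithin p n z t A

section hitProb

variable {p : ℝ} {z t : ℤ} {A : Set ℤ}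

lemma hitProbWithin_succ (hzt : z ≠ t) (hzA : z ∉ A) (n : ℕ) :
    hitProbWithin p (n + 1) z t A
      = p * hitProbWithin p n (z + 1) t A + (1 - p) * hitProbWithin p n (z - 1) t A := by
  rw [hitProbWithin, eventProb_cons]
  simp only [hitsBefore_cons_iff hzt hzA, if_true, Bool.false_eq_true, if_false, ← sub_eq_add_neg]
  rfl

lemma monotone_hitProbWithin (hp0 : 0 ≤ p) (hp1 : p ≤ 1) :
    Monotone fun n => hitProbWithin p n z t A :=
  monotone_nat_of_le_succ fun n => by
    rw [hitProbWithin, ← eventProb_init]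
    exact eventProb_mono hp0 hp1 fun s => HitsBefore.of_init

lemma bddAbove_hitProbWithin (hp0 : 0 ≤ p) (hp1 : p ≤ 1) :
    BddAbove (Set.range fun n => hitProbWithin p n z t A) :=
  ⟨1, Set.forall_mem_range.2 fun _ => eventProb_le_one hp0 hp1 _⟩

lemma tendsto_hitProbWithin (hp0 : 0 ≤ p) (hp1 : p ≤ 1) :
    Tendsto (fun n => hitProbWithin p n z t A) atTop (𝓝 (hitProb p z t A)) :=
  tendsto_atTop_ciSup (monotone_hitProbWithin hp0 hp1) (bddAbove_hitProbWithin hp0 hp1)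

lemma hitProbWithin_le_hitProb (hp0 : 0 ≤ p) (hp1 : p ≤ 1) (n : ℕ) :
    hitProbWithin p n z t A ≤ hitProb p z t A :=
  le_ciSup (bddAbove_hitProbWithin hp0 hp1) n

lemma hitProb_self : hitProb p t t A = 1 := by
  simp [hitProb, hitProbWithin, eventProb_of_forall _ hitsBefore_self]

lemma hitProb_of_mem (hzA : z ∈ A) (hzt : z ≠ t) : hitProb p z t A = 0 := by
  simp [hitProb, hitProbWithin, eventProb_of_forall_not _ fun _ => not_hitsBefore_of_mem hzA hzt]

lemma hitProb_eq (hp0 : 0 ≤ p) (hp1 : p ≤ 1) (hzt : z ≠ t) (hzA : z ∉ A) :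
    hitProb p z t A = p * hitProb p (z + 1) t A + (1 - p) * hitProb p (z - 1) t A :=
  tendsto_nhds_unique ((tendsto_add_atTop_iff_nat 1).2 (tendsto_hitProbWithin hp0 hp1))
    ((((tendsto_hitProbWithin hp0 hp1).const_mul p).add
      ((tendsto_hitProbWithin hp0 hp1).const_mul (1 - p))).congr
        fun n => (hitProbWithin_succ hzt hzA n).symm)

end hitProb

section harmonic

variable {p r : ℝ} {G : ℕ → ℝ} {M : ℕ}

lemma sub_eq_pow_mul_of_harmonic (hp : p ≠ 0) (hpr : p * r = 1 - p)
    (hG : ∀ m, 0 < m → m < M → G m = p * G (m + 1) + (1 - p) * G (m - 1)) {m : ℕ}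
    (hm : m < M) : G (m + 1) - G m = r ^ m * (G 1 - G 0) := by
  induction m with
  | zero => simp
  | succ m ih =>
    have hGm := hG (m + 1) m.succ_pos hm
    rw [Nat.add_sub_cancel] at hGm
    refine mul_left_cancel₀ hp ?_
    linear_combination -hGm + (1 - p) * ih (by omega) - r ^ m * (G 1 - G 0) * hpr

lemma eq_add_mul_geom_sum_of_harmonic (hp : p ≠ 0) (hpr : p * r = 1 - p)
    (hG : ∀ m, 0 < m → m < M → G m = p * G (m + 1) + (1 - p) * G (m - 1)) {m : ℕ}
    (hm : m ≤ M) : G m = G 0 + (G 1 - G 0) * ∑ i ∈ range m, r ^ i := by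
  rw [← sub_eq_iff_eq_add', ← Finset.sum_range_sub, Finset.mul_sum]
  refine Finset.sum_congr rfl fun i hi => ?_
  rw [sub_eq_pow_mul_of_harmonic hp hpr hG (by simp at hi; omega), mul_comm]

end harmonic

section gamblersRuin

variable {p : ℝ} {a : ℤ} {M m : ℕ}

lemma hitProb_add_nat_eq (hp0 : 0 < p) (hp1 : p ≤ 1) {t u : ℤ} (ht : t = a ∨ t = a + M)
    (hu : u = a ∨ u = a + M) (hm : m ≤ M) :
    hitProb p (a + m) t {u} = hitProb p a t {u}
      + (hitProb p (a + 1) t {u} - hitProb p a t {u}) * ∑ i ∈ range m, ((1 - p) / p) ^ i := by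
  have hpr : p * ((1 - p) / p) = 1 - p := mul_div_cancel₀ _ hp0.ne'
  have hG (k : ℕ) (hk0 : 0 < k) (hkM : k < M) : hitProb p (a + k) t {u} =
      p * hitProb p (a + ↑(k + 1)) t {u} + (1 - p) * hitProb p (a + ↑(k - 1)) t {u} := by
    have hinterior : a + k ≠ t ∧ a + k ∉ ({u} : Set ℤ) := by
      rw [Set.mem_singleton_iff]; omega
    rw [hitProb_eq hp0.le hp1 hinterior.1 hinterior.2]
    push_cast [Nat.cast_sub hk0]
    ring_nf
  simpa using eq_add_mul_geom_sum_of_harmonic (G := fun m : ℕ => hitProb p (a + m) t {u})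
    hp0.ne' hpr hG hm

lemma geom_sum_pos_of_prob (hp0 : 0 < p) (hp1 : p ≤ 1) (hM : M ≠ 0) :
    0 < ∑ i ∈ range M, ((1 - p) / p) ^ i :=
  geom_sum_pos (div_nonneg (by linarith) hp0.le) hM

lemma hitProb_up_eq (hp0 : 0 < p) (hp1 : p ≤ 1) (hM : M ≠ 0) (hm : m ≤ M) :
    hitProb p (a + m) (a + M) {a} =
      (∑ i ∈ range m, ((1 - p) / p) ^ i) / ∑ i ∈ range M, ((1 - p) / p) ^ i := by
  have h (k : ℕ) (hk : k ≤ M) :=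
    hitProb_add_nat_eq (a := a) (M := M) hp0 hp1 (Or.inr rfl) (Or.inl rfl) hk
  have h0 : hitProb p a (a + M) {a} = 0 := hitProb_of_mem rfl (by omega)
  have hTop := h M le_rfl
  rw [hitProb_self, h0] at hTop
  rw [h m hm, h0, eq_div_iff (geom_sum_pos_of_prob hp0 hp1 hM).ne']
  linear_combination -(∑ i ∈ range m, ((1 - p) / p) ^ i) * hTop

lemma hitProb_down_eq (hp0 : 0 < p) (hp1 : p ≤ 1) (hM : M ≠ 0) (hm : m ≤ M) :
    hitProb p (a + m) a {a + M} =
      1 - (∑ i ∈ range m, ((1 - p) / p) ^ i) / ∑ i ∈ range M, ((1 - p) / p) ^ i := by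
  have h (k : ℕ) (hk : k ≤ M) :=
    hitProb_add_nat_eq (a := a) (M := M) hp0 hp1 (Or.inl rfl) (Or.inr rfl) hk
  have h0 : hitProb p (a + M) a {a + M} = 0 := hitProb_of_mem rfl (by omega)
  have hBottom := h M le_rfl
  rw [hitProb_self, h0] at hBottom
  rw [h m hm, hitProb_self]
  field_simp [(geom_sum_pos_of_prob hp0 hp1 hM).ne']
  linear_combination -(∑ i ∈ range m, ((1 - p) / p) ^ i) * hBottom

end gamblersRuin

lemma tendsto_geom_sum_div_geom_sum_succ {r : ℝ} (hr : 0 < r) :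
    Tendsto (fun n => (∑ i ∈ range n, r ^ i) / ∑ i ∈ range (n + 1), r ^ i) atTop
      (𝓝 (min 1 r⁻¹)) := by
  simp_rw [geom_sum_succ]
  rcases lt_or_ge r 1 with hr1 | hr1
  · have hS := (hasSum_geometric_of_lt_one hr.le hr1).tendsto_sum_nat
    have hlim : (1 - r)⁻¹ / (r * (1 - r)⁻¹ + 1) = min 1 r⁻¹ := by
      rw [min_eq_left ((one_le_inv₀ hr).2 hr1.le)]
      field_simp [(sub_pos.2 hr1).ne']
      ring
    rw [← hlim]
    exact hS.div ((hS.const_mul r).add_const 1) (by positivity)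
  · have hS : Tendsto (fun n => ∑ i ∈ range n, r ^ i) atTop atTop :=
      tendsto_atTop_mono (fun n => by
        simpa using Finset.card_nsmul_le_sum (range n) (r ^ ·) 1 fun i _ => one_le_pow₀ hr1)
        tendsto_natCast_atTop_atTop
    have hlim : Tendsto (fun n => (r + (∑ i ∈ range n, r ^ i)⁻¹)⁻¹) atTop (𝓝 (r + 0)⁻¹) :=
      ((tendsto_inv_atTop_zero.comp hS).const_add r).inv₀ (by simpa using hr.ne')
    rw [min_eq_right (inv_le_one_of_one_le₀ hr1)]
    refine (add_zero r ▸ hlim).congr' ?_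
    filter_upwards [hS.eventually_gt_atTop 0] with n hn
    field_simp

section returnFromBelow

variable {p : ℝ}

lemma hitProb_neg_one_zero_barrier (hp0 : 0 < p) (hp1 : p ≤ 1) (m : ℕ) :
    hitProb p (-1) 0 {-(m + 1 : ℤ)} =
      (∑ i ∈ range m, ((1 - p) / p) ^ i) / ∑ i ∈ range (m + 1), ((1 - p) / p) ^ i := by
  have h := hitProb_up_eq (a := -(m + 1 : ℤ)) hp0 hp1 m.succ_ne_zero m.le_succ
  push_cast at h
  rwa [show -((m : ℤ) + 1) + m = -1 by ring, neg_add_cancel] at h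

/-- Squeezed between the barrier probabilities of `hitProb_neg_one_zero_barrier`: a barrier can
only lower the probability, and within `n` steps the walk cannot reach the barrier `-(n + 1)`. -/
lemma hitProb_neg_one_zero (hp0 : 0 < p) (hp1 : p < 1) :
    hitProb p (-1) 0 {0} = min 1 (p / (1 - p)) := by
  have hlim := tendsto_geom_sum_div_geom_sum_succ (div_pos (sub_pos.2 hp1) hp0)
  simp_rw [inv_div, ← hitProb_neg_one_zero_barrier hp0 hp1.le] at hlim
  have hupper (n : ℕ) : hitProbWithin p n (-1) 0 {0} ≤ hitProb p (-1) 0 {-(n + 1 : ℤ)} := by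
    refine le_trans (eventProb_mono hp0.le hp1.le fun s ⟨k, hk, hkt, _⟩ => ⟨k, hk, hkt, ?_⟩)
      (hitProbWithin_le_hitProb hp0.le hp1.le n)
    intro j hj hjA
    have := sub_le_walkPos (-1) s j
    rw [Set.mem_singleton_iff.1 hjA] at this
    omega
  have hlower (m : ℕ) : hitProb p (-1) 0 {-(m + 1 : ℤ)} ≤ hitProb p (-1) 0 {0} :=
    ciSup_le fun n => le_trans (eventProb_mono hp0.le hp1.le fun s hs =>
        hs.insert_target.mono (Set.singleton_subset_iff.2 (Set.mem_insert _ _)))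
      (hitProbWithin_le_hitProb hp0.le hp1.le n)
  exact le_antisymm (le_of_tendsto_of_tendsto (tendsto_hitProbWithin hp0.le hp1.le) hlim
    (Eventually.of_forall hupper)) (le_of_tendsto' hlim hlower)

end returnFromBelow

def ExceedsBeforeReturn (x : ℕ) {n : ℕ} (s : Fin n → Bool) : Prop :=
  ∃ k ≤ n, 0 < k ∧ walkPos 0 s k = (x : ℤ) + 1 ∧ ∀ j, 0 < j → j < k → walkPos 0 s j ≠ 0

def ReturnsBelow (x : ℕ) {n : ℕ} (s : Fin n → Bool) : Prop :=
  ∃ k ≤ n, 0 < k ∧ walkPos 0 s k = 0 ∧ (∀ j, 0 < j → j < k → walkPos 0 s j ≠ 0) ∧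
    ∀ j ≤ k, walkPos 0 s j ≤ (x : ℤ)

lemma excursionExceedProb_eq (p : ℝ) (x n : ℕ) :
    excursionExceedProb p x n = eventProb p (ExceedsBeforeReturn x (n := n)) :=
  Finset.sum_congr rfl fun _ _ => if_congr Iff.rfl rfl rfl

lemma excursionReturnBelowProb_eq (p : ℝ) (x n : ℕ) :
    excursionReturnBelowProb p x n = eventProb p (ReturnsBelow x (n := n)) :=
  Finset.sum_congr rfl fun _ _ => if_congr Iff.rfl rfl rfl

section firstStep

variable {x n : ℕ} {s : Fin n → Bool}

lemma exceedsBeforeReturn_cons_true_iff :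
    ExceedsBeforeReturn x (Fin.cons true s) ↔ HitsBefore 1 (x + 1) {0} s := by
  constructor
  · rintro ⟨_ | k, hk, hk0, hkt, hbefore⟩
    · omega
    refine ⟨k, by omega, by simpa [walkPos_cons_succ] using hkt, fun j hj => ?_⟩
    simpa [walkPos_cons_succ] using hbefore (j + 1) j.succ_pos (by omega)
  · rintro ⟨k, hk, hkt, hbefore⟩
    refine ⟨k + 1, by omega, k.succ_pos, by simpa [walkPos_cons_succ] using hkt,
      fun j hj0 hjk => ?_⟩
    cases j with
    | zero => omega
    | succ j => simpa [walkPos_cons_succ] using hbefore j (by omega)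

lemma not_exceedsBeforeReturn_cons_false : ¬ ExceedsBeforeReturn x (Fin.cons false s) := by
  rintro ⟨_ | k, -, hk0, hkt, hbefore⟩
  · omega
  simp only [walkPos_cons_succ, Bool.false_eq_true, if_false, zero_add] at hkt
  have hne (i : ℕ) (hi : i < k + 1) : walkPos (-1) s i ≠ 0 := by
    rcases Nat.lt_succ_iff_lt_or_eq.1 hi with hi | rfl
    · simpa [walkPos_cons_succ] using hbefore (i + 1) i.succ_pos (by omega)
    · omega
  have := walkPos_lt_of_forall_ne (by norm_num) hne k.lt_succ_self
  omega

lemma returnsBelow_cons_true_iff :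
    ReturnsBelow x (Fin.cons true s) ↔ HitsBefore 1 0 {(x : ℤ) + 1} s := by
  constructor
  · rintro ⟨_ | k, hk, hk0, hkt, -, hle⟩
    · omega
    refine ⟨k, by omega, by simpa [walkPos_cons_succ] using hkt, fun j hj hjA => ?_⟩
    have := hle (j + 1) (by omega)
    simp only [walkPos_cons_succ, if_true, zero_add, Set.mem_singleton_iff.1 hjA] at this
    omega
  · intro h
    obtain ⟨k, hk, hkt, hbefore⟩ := h.insert_target
    have hlt {j : ℕ} (hj : j < k) : walkPos 1 s j < x + 1 :=
      walkPos_lt_of_forall_ne (by omega) (fun i hi h => hbefore i hi (Or.inr h)) hj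
    refine ⟨k + 1, by omega, k.succ_pos, by simpa [walkPos_cons_succ] using hkt,
      fun j hj0 hjk => ?_, fun j hjk => ?_⟩
    · cases j with
      | zero => omega
      | succ j => simpa [walkPos_cons_succ] using fun h => hbefore j (by omega) (Or.inl h)
    · cases j with
      | zero => simp [walkPos_zero]
      | succ j =>
        simp only [walkPos_cons_succ, if_true, zero_add]
        rcases Nat.lt_or_ge j k with hj | hj
        · linarith [hlt hj]
        · rw [show j = k by omega, hkt]; positivity

lemma returnsBelow_cons_false_iff :
    ReturnsBelow x (Fin.cons false s) ↔ HitsBefore (-1) 0 {0} s := by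
  constructor
  · rintro ⟨_ | k, hk, hk0, hkt, hbefore, -⟩
    · omega
    refine ⟨k, by omega, by simpa [walkPos_cons_succ] using hkt, fun j hj => ?_⟩
    simpa [walkPos_cons_succ] using hbefore (j + 1) j.succ_pos (by omega)
  · rintro ⟨k, hk, hkt, hbefore⟩
    have hlt {j : ℕ} (hj : j < k) : walkPos (-1) s j < 0 :=
      walkPos_lt_of_forall_ne (by norm_num) hbefore hj
    refine ⟨k + 1, by omega, k.succ_pos, by simpa [walkPos_cons_succ] using hkt,
      fun j hj0 hjk => ?_, fun j hjk => ?_⟩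
    · cases j with
      | zero => omega
      | succ j => simpa [walkPos_cons_succ] using hbefore j (by omega)
    · cases j with
      | zero => simp [walkPos_zero]
      | succ j =>
        simp only [walkPos_cons_succ, Bool.false_eq_true, if_false, zero_add]
        rcases Nat.lt_or_ge j k with hj | hj
        · linarith [hlt hj]
        · rw [show j = k by omega, hkt]; positivity

end firstStep

lemma excursionExceedProb_succ (p : ℝ) (x n : ℕ) :
    excursionExceedProb p x (n + 1) = p * hitProbWithin p n 1 (x + 1) {0} := by
  rw [excursionExceedProb_eq, eventProb_cons,
    eventProb_of_forall_not _ fun _ => not_exceedsBeforeReturn_cons_false,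
    eventProb_congr fun _ => exceedsBeforeReturn_cons_true_iff, mul_zero, add_zero]
  rfl

lemma excursionReturnBelowProb_succ (p : ℝ) (x n : ℕ) :
    excursionReturnBelowProb p x (n + 1) =
      p * hitProbWithin p n 1 0 {(x : ℤ) + 1} + (1 - p) * hitProbWithin p n (-1) 0 {0} := by
  rw [excursionReturnBelowProb_eq, eventProb_cons,
    eventProb_congr fun _ => returnsBelow_cons_true_iff,
    eventProb_congr fun _ => returnsBelow_cons_false_iff]
  rfl

section limits

variable {p : ℝ}

lemma tendsto_excursionExceedProb (hp0 : 0 < p) (hp1 : p ≤ 1) (x : ℕ) :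
    Tendsto (fun n => excursionExceedProb p x n) atTop
      (𝓝 (p / ∑ i ∈ range (x + 1), ((1 - p) / p) ^ i)) := by
  have hup := hitProb_up_eq (a := 0) (M := x + 1) (m := 1) hp0 hp1 x.succ_ne_zero (by omega)
  push_cast at hup
  simp only [zero_add, range_one, sum_singleton, pow_zero] at hup
  rw [← tendsto_add_atTop_iff_nat 1, div_eq_mul_one_div, ← hup]
  simp_rw [excursionExceedProb_succ]
  exact (tendsto_hitProbWithin hp0.le hp1).const_mul p

lemma tendsto_excursionReturnBelowProb (hp0 : 0 < p) (hp1 : p < 1) (x : ℕ) :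
    Tendsto (fun n => excursionReturnBelowProb p x n) atTop
      (𝓝 (p * (1 - 1 / ∑ i ∈ range (x + 1), ((1 - p) / p) ^ i) + min p (1 - p))) := by
  have hdown := hitProb_down_eq (a := 0) (M := x + 1) (m := 1) hp0 hp1.le x.succ_ne_zero (by omega)
  push_cast at hdown
  simp only [zero_add, range_one, sum_singleton, pow_zero] at hdown
  have hq : 0 < 1 - p := sub_pos.2 hp1
  have hret : (1 - p) * hitProb p (-1) 0 {0} = min p (1 - p) := by
    rw [hitProb_neg_one_zero hp0 hp1, mul_min_of_nonneg _ _ hq.le, mul_one,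
      mul_div_cancel₀ _ hq.ne', min_comm]
  rw [← tendsto_add_atTop_iff_nat 1, ← hdown, ← hret]
  simp_rw [excursionReturnBelowProb_succ]
  exact ((tendsto_hitProbWithin hp0.le hp1.le).const_mul p).add
    ((tendsto_hitProbWithin hp0.le hp1.le).const_mul (1 - p))

end limits

theorem stmt_5_general (p q : ℝ) (x : ℕ) (hp : p ∈ Set.Ioo (0:ℝ) 1) (hq : q = 1 - p)
    (hpq : p ≠ q) :
    Tendsto (fun n => excursionExceedProb p x n) atTop
      (𝓝 ((q - p) / ((q / p) ^ (x + 1) - 1))) ∧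
    Tendsto (fun n => excursionReturnBelowProb p x n) atTop
      (𝓝 (p * ((q / p) ^ (x + 1) - q / p) / ((q / p) ^ (x + 1) - 1) + min p q)) := by
  obtain ⟨hp0, hp1⟩ := hp
  have hS := geom_sum_mul (q / p) (x + 1)
  have hSpos : 0 < ∑ i ∈ range (x + 1), (q / p) ^ i :=
    hq ▸ geom_sum_pos_of_prob hp0 hp1.le x.succ_ne_zero
  have hpr : p * (q / p) = q := mul_div_cancel₀ _ hp0.ne'
  have hr1 : q / p - 1 ≠ 0 := by
    rw [div_sub_one hp0.ne']
    exact div_ne_zero (sub_ne_zero.2 hpq.symm) hp0.ne'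
  refine ⟨?_, ?_⟩
  · convert hq ▸ tendsto_excursionExceedProb hp0 hp1.le x using 2
    generalize q / p = r at hS hSpos hpr hr1 ⊢
    rw [← hS]
    field_simp
    linear_combination -hpr
  · convert hq ▸ tendsto_excursionReturnBelowProb hp0 hp1 x using 3
    generalize q / p = r at hS hSpos hpr hr1 ⊢
    rw [← hS]
    field_simp
    linear_combination -hS

/-- excursion probabilities for the simple asymmetric walk on ℤ
(up-probability `p`, down-probability `q = 1 - p`, `p ≠ q`). -/
theorem stmt_5 (p q : ℝ) (x : ℕ) (hp : p ∈ Set.Ioo (0:ℝ) 1) (hq : q = 1 - p)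
    (hpq : p ≠ q) (hx : 0 < x) :
    Tendsto (fun n => excursionExceedProb p x n) atTop
      (𝓝 ((q - p) / ((q / p) ^ (x + 1) - 1))) ∧
    Tendsto (fun n => excursionReturnBelowProb p x n) atTop
      (𝓝 (p * ((q / p) ^ (x + 1) - q / p) / ((q / p) ^ (x + 1) - 1) + min p q)) :=
  stmt_5_general p q x hp hq hpq
end

section
/- Let α ∈ (0,1), 1/2 < p < 1, q = 1−p, and let f:[0,1]→[0,1] be convex and continuously differentiable with f(1)=1, f not the identity. Let s₀ ∈ (0,1) be the unique root of α(1 − f(1−s)) + (2q(1−α) − 1)s + (1−α)(p−q) = 0. Suppose (u_x)_{x∈ℕ} is a sequence in [0,1] satisfying, for every x, u_x = α(1 − f(1 − u_x)) + (1−α)·p₁(x)·u_x + (1−α)·p₂(x), where p₁(x) → 2q and p₂(x) → p−q as x → ∞ with p₁(x), p₂(x) ∈ [0,1], p₁(x)+p₂(x) ≤ 1. Then u_x → s₀ as x → ∞. -/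
open Filter Topology Set

/-- stability of the fixed points, right-drifting case: u_x → s₀. -/
theorem stmt_13 (f : ℝ → ℝ) (α p q s₀ : ℝ)
    (hα : α ∈ Ioo (0:ℝ) 1) (hp : p ∈ Ioo (1/2 : ℝ) 1) (hq : q = 1 - p)
    (hconv : ConvexOn ℝ (Icc 0 1) f)
    (hdiff : ContDiffOn ℝ 1 f (Icc 0 1))
    (hmaps : MapsTo f (Icc 0 1) (Icc 0 1))
    (hf1 : f 1 = 1)
    (hne : ∃ t ∈ Icc (0:ℝ) 1, f t ≠ t)
    (hs₀ : s₀ ∈ Ioo (0:ℝ) 1)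
    (hroot : α * (1 - f (1 - s₀)) + (2 * q * (1 - α) - 1) * s₀ + (1 - α) * (p - q) = 0)
    (huniq : ∀ s ∈ Icc (0:ℝ) 1,
        α * (1 - f (1 - s)) + (2 * q * (1 - α) - 1) * s + (1 - α) * (p - q) = 0 → s = s₀)
    (u p₁ p₂ : ℕ → ℝ)
    (hu : ∀ x, u x ∈ Icc (0:ℝ) 1)
    (hp₁ : ∀ x, p₁ x ∈ Icc (0:ℝ) 1) (hp₂ : ∀ x, p₂ x ∈ Icc (0:ℝ) 1)
    (hsum : ∀ x, p₁ x + p₂ x ≤ 1)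
    (hp₁lim : Tendsto p₁ atTop (𝓝 (2 * q)))
    (hp₂lim : Tendsto p₂ atTop (𝓝 (p - q)))
    (heq : ∀ x, u x = α * (1 - f (1 - u x)) + (1 - α) * p₁ x * u x + (1 - α) * p₂ x) :
    Tendsto u atTop (𝓝 s₀) := by

  have hcont : ContinuousOn f (Icc 0 1) := hdiff.continuousOn
  apply tendsto_of_subseq_tendsto
  intro ns hns
  obtain ⟨s, hsmem, φ, hφ, hlim⟩ :=
    (isCompact_Icc : IsCompact (Icc (0:ℝ) 1)).tendsto_subseq (fun n => hu (ns n))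
  refine ⟨φ, ?_⟩
  have hw : Tendsto (fun n => ns (φ n)) atTop atTop := hns.comp hφ.tendsto_atTop
  have h1s : (1 - s) ∈ Icc (0:ℝ) 1 :=
    ⟨by linarith [hsmem.2], by linarith [hsmem.1]⟩
  have htf : Tendsto (fun n => f (1 - u (ns (φ n)))) atTop (𝓝 (f (1 - s))) := by
    apply (hcont.continuousWithinAt h1s).tendsto.comp
    apply tendsto_nhdsWithin_of_tendsto_nhds_of_eventually_within
    · exact tendsto_const_nhds.sub hlim
    · exact Filter.Eventually.of_forall fun n =>
        ⟨by linarith [(hu (ns (φ n))).2], by linarith [(hu (ns (φ n))).1]⟩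
  have hrhs : Tendsto (fun n => α * (1 - f (1 - u (ns (φ n)))) +
      (1 - α) * p₁ (ns (φ n)) * u (ns (φ n)) + (1 - α) * p₂ (ns (φ n))) atTop
      (𝓝 (α * (1 - f (1 - s)) + (1 - α) * (2 * q) * s + (1 - α) * (p - q))) :=
    ((tendsto_const_nhds.mul (tendsto_const_nhds.sub htf)).add
      ((tendsto_const_nhds.mul (hp₁lim.comp hw)).mul hlim)).add
      (tendsto_const_nhds.mul (hp₂lim.comp hw))
  have hlim2 : Tendsto (fun n => u (ns (φ n))) atTop
      (𝓝 (α * (1 - f (1 - s)) + (1 - α) * (2 * q) * s + (1 - α) * (p - q))) :=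
    hrhs.congr fun n => (heq (ns (φ n))).symm
  have heq' : s = α * (1 - f (1 - s)) + (1 - α) * (2 * q) * s + (1 - α) * (p - q) :=
    tendsto_nhds_unique hlim hlim2
  have hs : s = s₀ := huniq s hsmem (by linear_combination -heq')
  rw [hs] at hlim
  exact hlim
end

section
/- Let α ∈ (0,1) and let f:[0,1]→[0,1] be convex, differentiable, with f(1)=1, f'(1)=m, and suppose αm + (1−α) < 1 (i.e., m < 1). If for each positive integer x, u_x ∈ [0,1] satisfies u_x = α(1−f(1−u_x)) + (1−α)·(2x+1)/(2(x+1))·u_x + (1−α)/(2(x+1)), then u_x ≤ (1−α)/(2(x+1)) · 1/(1 − αm − (1−α)(2x+1)/(2(x+1))), and in particular u_x → 0 as x → ∞. -/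
open Filter Topology Set

/-- quantitative vanishing of the tail probabilities in the subcritical case. -/
theorem stmt_16 (f : ℝ → ℝ) (α m : ℝ)
    (hα : α ∈ Ioo (0:ℝ) 1)
    (hconv : ConvexOn ℝ (Icc 0 1) f)
    (hdiff : DifferentiableOn ℝ f (Icc 0 1))
    (hmaps : MapsTo f (Icc 0 1) (Icc 0 1))
    (hf1 : f 1 = 1) (hf' : derivWithin f (Icc 0 1) 1 = m)
    (hsub : α * m + (1 - α) < 1)
    (u : ℕ → ℝ) (hu : ∀ x, 0 < x → u x ∈ Icc (0:ℝ) 1)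
    (heq : ∀ x : ℕ, 0 < x → u x = α * (1 - f (1 - u x))
        + (1 - α) * ((2 * x + 1) / (2 * (x + 1))) * u x + (1 - α) / (2 * (x + 1))) :
    (∀ x : ℕ, 0 < x → u x ≤ (1 - α) / (2 * (x + 1))
        * (1 / (1 - α * m - (1 - α) * ((2 * x + 1) / (2 * (x + 1)))))) ∧
    Tendsto u atTop (𝓝 0) := by
  obtain ⟨hα0, hα1⟩ := hα
  -- mean value inequality: 1 - f (1 - v) ≤ m * v for v ∈ [0,1]
  have key : ∀ v : ℝ, v ∈ Icc (0:ℝ) 1 → 1 - f (1 - v) ≤ m * v := by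
    intro v hv
    rcases eq_or_lt_of_le hv.1 with h0 | h0
    · simp [← h0, hf1]
    · have h1v : (1 - v) ∈ Icc (0:ℝ) 1 := ⟨by linarith [hv.2], by linarith⟩
      have h1 : (1:ℝ) ∈ Icc (0:ℝ) 1 := ⟨by norm_num, le_refl 1⟩
      have hlt : 1 - v < 1 := by linarith
      have := hconv.slope_le_derivWithin h1v h1 hlt (hdiff 1 h1)
      rw [hf', slope_def_field, hf1] at this
      have hdiv : (1 - f (1 - v)) / v ≤ m := by
        have : (1 - f (1 - v)) / (1 - (1 - v)) ≤ m := this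
        simpa using this
      calc 1 - f (1 - v) = (1 - f (1 - v)) / v * v := by field_simp
        _ ≤ m * v := mul_le_mul_of_nonneg_right hdiv h0.le
  -- positivity of the uniform denominator
  have hδ : 0 < 1 - α * m - (1 - α) := by linarith
  -- main bound
  have main : ∀ x : ℕ, 0 < x → u x ≤ (1 - α) / (2 * (x + 1))
      * (1 / (1 - α * m - (1 - α) * ((2 * x + 1) / (2 * (x + 1))))) := by
    intro x hx
    set c : ℝ := (1 - α) * ((2 * x + 1) / (2 * (x + 1))) with hc
    set b : ℝ := (1 - α) / (2 * (x + 1)) with hb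
    have hxpos : (0:ℝ) < 2 * (x + 1) := by positivity
    have hratio : (2 * (x:ℝ) + 1) / (2 * (x + 1)) ≤ 1 := by
      rw [div_le_one hxpos]; linarith
    have hcle : c ≤ 1 - α := by
      calc c ≤ (1 - α) * 1 := mul_le_mul_of_nonneg_left hratio (by linarith)
        _ = 1 - α := mul_one _
    have hD : 0 < 1 - α * m - c := by linarith
    have hineq := heq x hx
    have hmv := key (u x) (hu x hx)
    have h2 : u x ≤ α * (m * u x) + c * u x + b := by
      have := mul_le_mul_of_nonneg_left hmv hα0.le
      rw [hc, hb]; linarith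
    have h4 : u x ≤ b / (1 - α * m - c) := (le_div_iff₀ hD).mpr (by nlinarith)
    rw [div_eq_mul_one_div] at h4
    exact h4
  refine ⟨main, ?_⟩
  -- squeeze to zero
  have hbound : ∀ x : ℕ, 0 < x → u x ≤ (1 - α) / (2 * (x + 1)) * (1 / (1 - α * m - (1 - α))) := by
    intro x hx
    refine le_trans (main x hx) ?_
    have hxpos : (0:ℝ) < 2 * (x + 1) := by positivity
    have hratio : (2 * (x:ℝ) + 1) / (2 * (x + 1)) ≤ 1 := by
      rw [div_le_one hxpos]; linarith
    have hcle : (1 - α) * ((2 * x + 1) / (2 * (x + 1))) ≤ 1 - α := by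
      calc (1 - α) * ((2 * x + 1) / (2 * (x + 1))) ≤ (1 - α) * 1 :=
        mul_le_mul_of_nonneg_left hratio (by linarith)
        _ = 1 - α := mul_one _
    have hD : 0 < 1 - α * m - (1 - α) * ((2 * x + 1) / (2 * (x + 1))) := by linarith
    have hb : 0 ≤ (1 - α) / (2 * (x + 1)) := div_nonneg (by linarith) (by positivity)
    refine mul_le_mul_of_nonneg_left ?_ hb
    exact one_div_le_one_div_of_le hδ (by linarith)
  have htend : Tendsto (fun x : ℕ => (1 - α) / (2 * ((x:ℝ) + 1)) * (1 / (1 - α * m - (1 - α))))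
      atTop (𝓝 0) := by
    have h1 : Tendsto (fun x : ℕ => 2 * ((x:ℝ) + 1)) atTop atTop := by
      apply Tendsto.const_mul_atTop (by norm_num : (0:ℝ) < 2)
      exact tendsto_atTop_add_const_right _ 1 tendsto_natCast_atTop_atTop
    have h2 : Tendsto (fun x : ℕ => (1 - α) / (2 * ((x:ℝ) + 1))) atTop (𝓝 0) :=
      Tendsto.div_atTop tendsto_const_nhds h1
    simpa using h2.mul_const (1 / (1 - α * m - (1 - α)))
  refine squeeze_zero' ?_ ?_ htend
  · filter_upwards [eventually_gt_atTop 0] with x hx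
    exact (hu x hx).1
  · filter_upwards [eventually_gt_atTop 0] with x hx
    exact hbound x hx
end

section
/- Let α ∈ (0,1), m ≥ 0, and f:[0,1]→[0,1] with f(1)=1, f'(1)=m, f twice continuously differentiable. Suppose sequences (u_x) ⊂ (0,1] and (a_x), (b_x) ⊂ [0,1] satisfy u_x = α(1−f(1−u_x)) + (1−α)a_x u_x + (1−α)b_x for all x, with u_x → 0, b_x > 0, a_x → a where αm + (1−α)a < 1. Then u_x / b_x → (1−α)/(1 − αm − (1−α)a) as x → ∞. -/
open Filter Topology Set

/-!
Dividing the fixed-point equation by `u x` turns it into the exact identity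
`u x * (1 - α * s x - (1 - α) * a' x) = (1 - α) * b x`, where `s x = (1 - f (1 - u x)) / u x`
is a difference quotient of `f` at `1`. As `u x → 0`, `s x → f'(1) = m`, so the bracket tends to
`1 - α * m - (1 - α) * a`, which is nonzero by subcriticality, and `u x / b x` is `(1 - α)`
divided by the bracket.
-/

theorem HasDerivAt.tendsto_backward_slope {ι : Type*} {l : Filter ι} {f : ℝ → ℝ} {f' x₀ : ℝ}
    (hf : HasDerivAt f f' x₀) {t : ι → ℝ} (ht : Tendsto t l (𝓝 0)) (ht0 : ∀ᶠ i in l, t i ≠ 0) :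
    Tendsto (fun i => (f x₀ - f (x₀ - t i)) / t i) l (𝓝 f') := by
  have hneg : Tendsto (fun i => -t i) l (𝓝[≠] 0) :=
    tendsto_nhdsWithin_iff.mpr ⟨by simpa using ht.neg, ht0.mono fun i hi => neg_ne_zero.mpr hi⟩
  refine (hf.tendsto_slope_zero.comp hneg).congr fun i => ?_
  simp only [Function.comp, smul_eq_mul, ← sub_eq_add_neg]
  rw [inv_mul_eq_div, ← neg_div_neg_eq, neg_sub, neg_neg]

theorem tendsto_div_of_mul_eq_mul {ι : Type*} {l : Filter ι} {u b D : ι → ℝ} {c L : ℝ}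
    (hD : Tendsto D l (𝓝 L)) (hL : L ≠ 0) (hb : ∀ᶠ i in l, b i ≠ 0)
    (h : ∀ᶠ i in l, u i * D i = c * b i) :
    Tendsto (fun i => u i / b i) l (𝓝 (c / L)) := by
  refine (tendsto_const_nhds.div hD hL).congr' ?_
  filter_upwards [hb, h, hD.eventually_ne hL] with i hbi hi hDi
  rw [Pi.div_apply, div_eq_div_iff hDi hbi, ← hi]

theorem stmt_19_general (f : ℝ → ℝ) (α m a : ℝ)
    (hdiff : ContDiff ℝ 2 f)
    (hf1 : f 1 = 1) (hf' : deriv f 1 = m)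
    (u a' b : ℕ → ℝ)
    (hu : ∀ x, u x ∈ Ioc (0:ℝ) 1)
    (heq : ∀ x, u x = α * (1 - f (1 - u x)) + (1 - α) * a' x * u x + (1 - α) * b x)
    (hu0 : Tendsto u atTop (𝓝 0))
    (hbpos : ∀ x, 0 < b x)
    (halim : Tendsto a' atTop (𝓝 a))
    (hsub : α * m + (1 - α) * a < 1) :
    Tendsto (fun x => u x / b x) atTop (𝓝 ((1 - α) / (1 - α * m - (1 - α) * a))) := by
  have hu_ne (x : ℕ) : u x ≠ 0 := (hu x).1.ne'
  have hder : HasDerivAt f m 1 := hf' ▸ (hdiff.differentiable (by norm_num) 1).hasDerivAt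
  have hslope : Tendsto (fun x => (1 - f (1 - u x)) / u x) atTop (𝓝 m) := by
    simpa only [hf1] using hder.tendsto_backward_slope hu0 (.of_forall hu_ne)
  have hbracket := (tendsto_const_nhds (x := (1 : ℝ))).sub (hslope.const_mul α)
    |>.sub (halim.const_mul (1 - α))
  refine tendsto_div_of_mul_eq_mul hbracket (by linarith) (.of_forall fun x => (hbpos x).ne')
    (.of_forall fun x => ?_)
  field_simp [hu_ne x]
  linarith [heq x]

/-- general first-order asymptotic transfer lemma. -/
theorem stmt_19 (f : ℝ → ℝ) (α m a : ℝ)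
    (hα : α ∈ Ioo (0:ℝ) 1) (hm : 0 ≤ m)
    (hdiff : ContDiff ℝ 2 f)
    (hmaps : MapsTo f (Icc 0 1) (Icc 0 1))
    (hf1 : f 1 = 1) (hf' : deriv f 1 = m)
    (u a' b : ℕ → ℝ)
    (hu : ∀ x, u x ∈ Ioc (0:ℝ) 1)
    (ha' : ∀ x, a' x ∈ Icc (0:ℝ) 1) (hb : ∀ x, b x ∈ Icc (0:ℝ) 1)
    (heq : ∀ x, u x = α * (1 - f (1 - u x)) + (1 - α) * a' x * u x + (1 - α) * b x)
    (hu0 : Tendsto u atTop (𝓝 0))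
    (hbpos : ∀ x, 0 < b x)
    (halim : Tendsto a' atTop (𝓝 a))
    (hsub : α * m + (1 - α) * a < 1) :
    Tendsto (fun x => u x / b x) atTop (𝓝 ((1 - α) / (1 - α * m - (1 - α) * a))) :=
  stmt_19_general f α m a hdiff hf1 hf' u a' b hu heq hu0 hbpos halim hsub
end
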